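/- arXiv:1808.06451 — 6 statements merged into one kernel-verified Lean document; each statement's English description precedes it below -/
import Mathlib

section
/- Let ψ be the inverse of y ↦ y - 1 + log y. For every n ≥ 1, the identity (1 + ψ)ψ^(n) = ψ^(n-1) - (1/2) ∑_{j=1}^{n-1} C(n,j) ψ^(j) ψ^(n-j) holds, where ψ^(j) denotes the j-th derivative of ψ and ψ^(0) = ψ. -/
/-!
By the inverse function theorem `ψ` solves the autonomous equation `(1 + ψ) ψ' = ψ`,
and bootstrapping `ψ' = ψ / (1 + ψ)` shows that `ψ` is smooth. Differentiating the equation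
`n - 1` times with the Leibniz rule gives
`(1 + ψ) ψ⁽ⁿ⁾ + ∑_{j=1}^{n-1} C(n-1,j) ψ⁽ʲ⁾ψ⁽ⁿ⁻ʲ⁾ = ψ⁽ⁿ⁻¹⁾`, and since the summand without
its coefficient is symmetric under `j ↦ n - j`, Pascal's rule lets us replace `C(n-1,j)` by
`C(n,j) / 2`.
-/

open Real Finset
open scoped ContDiff

section Combinatorics

variable {R : Type*} [CommSemiring R]

theorem sum_Ico_choose_succ_mul_eq_two_mul (a : ℕ → R) (m : ℕ) :
    ∑ j ∈ Ico 1 (m + 1), ((m + 1).choose j : R) * a j * a (m + 1 - j)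
      = 2 * ∑ j ∈ Ico 1 (m + 1), (m.choose j : R) * a j * a (m + 1 - j) := by
  have hreflect : ∑ j ∈ Ico 1 (m + 1), (m.choose (j - 1) : R) * a j * a (m + 1 - j)
      = ∑ j ∈ Ico 1 (m + 1), (m.choose j : R) * a j * a (m + 1 - j) := by
    refine sum_nbij' (fun j => m + 1 - j) (fun j => m + 1 - j) ?_ ?_ ?_ ?_ ?_ <;>
      simp only [mem_Ico]
    iterate 4 omega
    intro j hj
    rw [Nat.choose_symm_of_eq_add (show m = (m + 1 - j) + (j - 1) by omega),
      Nat.sub_sub_self (show j ≤ m + 1 by omega)]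
    ring
  have hpascal : ∀ j ∈ Ico 1 (m + 1), ((m + 1).choose j : R) * a j * a (m + 1 - j)
      = (m.choose (j - 1) : R) * a j * a (m + 1 - j)
        + (m.choose j : R) * a j * a (m + 1 - j) := by
    intro j hj
    obtain ⟨i, rfl⟩ : ∃ i, j = i + 1 := ⟨j - 1, by simp only [mem_Ico] at hj; omega⟩
    rw [Nat.choose_succ_succ, Nat.add_sub_cancel]
    push_cast
    ring
  rw [sum_congr rfl hpascal, sum_add_distrib, hreflect, two_mul]

end Combinatorics

section Leibniz

variable {𝕜 : Type*} [NontriviallyNormedField 𝕜]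

theorem iteratedDeriv_eq_of_one_add_mul_deriv {f : 𝕜 → 𝕜} (hf : ContDiff 𝕜 ∞ f)
    (hode : ∀ z, (1 + f z) * deriv f z = f z) (m : ℕ) (z : 𝕜) :
    iteratedDeriv m f z = (1 + f z) * iteratedDeriv (m + 1) f z
      + ∑ j ∈ Ico 1 (m + 1),
          (m.choose j : 𝕜) * iteratedDeriv j f z * iteratedDeriv (m + 1 - j) f z := by
  have h1f : ContDiff 𝕜 ∞ (fun z => 1 + f z) := contDiff_const.add hf
  have hf' : ContDiff 𝕜 ∞ (deriv f) := (contDiff_infty_iff_deriv.mp hf).2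
  have hshift : ∀ j ∈ Ico 1 (m + 1),
      (m.choose j : 𝕜) * iteratedDeriv j (fun z => 1 + f z) z * iteratedDeriv (m - j) (deriv f) z
        = (m.choose j : 𝕜) * iteratedDeriv j f z * iteratedDeriv (m + 1 - j) f z := by
    intro j hj
    simp only [mem_Ico] at hj
    rw [iteratedDeriv_const_add (by omega), ← iteratedDeriv_succ',
      show m - j + 1 = m + 1 - j by omega]
  calc iteratedDeriv m f z
      = iteratedDeriv m (fun z => (1 + f z) * deriv f z) z := by simp only [hode]
    _ = _ := by
      rw [iteratedDeriv_fun_mul (h1f.contDiffAt.of_le (mod_cast le_top))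
          (hf'.contDiffAt.of_le (mod_cast le_top)),
        range_eq_Ico, sum_eq_sum_Ico_succ_bot (by omega), sum_congr rfl hshift]
      simp [iteratedDeriv_succ']

end Leibniz

theorem strictMonoOn_sub_one_add_log : StrictMonoOn (fun y => y - 1 + log y) (Set.Ioi 0) :=
  fun a ha b _ hab => by
    have := log_lt_log ha hab
    dsimp only
    linarith

section DeformedExp

variable {ψ : ℝ → ℝ} (hpos : ∀ z, 0 < ψ z) (hinv : ∀ z, ψ z - 1 + log (ψ z) = z)
include hpos hinv

theorem strictMono_of_sub_one_add_log_eq : StrictMono ψ := fun a b hab =>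
  (strictMonoOn_sub_one_add_log.lt_iff_lt (hpos a) (hpos b)).mp (by simpa only [hinv] using hab)

theorem apply_sub_one_add_log_eq {y : ℝ} (hy : 0 < y) : ψ (y - 1 + log y) = y :=
  strictMonoOn_sub_one_add_log.injOn (hpos _) hy (hinv _)

theorem continuous_of_sub_one_add_log_eq : Continuous ψ := by
  refine continuous_iff_continuousAt.mpr fun a =>
    continuousAt_of_monotoneOn_of_image_mem_nhds
      ((strictMono_of_sub_one_add_log_eq hpos hinv).monotone.monotoneOn _) Filter.univ_mem ?_
  rw [Set.image_univ]
  exact Filter.mem_of_superset (Ioi_mem_nhds (hpos a))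
    fun y hy => ⟨_, apply_sub_one_add_log_eq hpos hinv hy⟩

theorem hasDerivAt_of_sub_one_add_log_eq (z : ℝ) : HasDerivAt ψ (ψ z / (1 + ψ z)) z := by
  have hψz := hpos z
  have hlog : HasDerivAt (fun y => y - 1 + log y) (1 + (ψ z)⁻¹) (ψ z) :=
    ((hasDerivAt_id _).sub_const 1).add (hasDerivAt_log hψz.ne')
  have h := hlog.of_local_left_inverse (continuous_of_sub_one_add_log_eq hpos hinv).continuousAt
    (by positivity) (.of_forall hinv)
  rwa [show (1 + (ψ z)⁻¹)⁻¹ = ψ z / (1 + ψ z) by field_simp; ring] at h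

theorem deriv_of_sub_one_add_log_eq : deriv ψ = fun z => ψ z / (1 + ψ z) :=
  funext fun z => (hasDerivAt_of_sub_one_add_log_eq hpos hinv z).deriv

theorem one_add_mul_deriv_of_sub_one_add_log_eq (z : ℝ) : (1 + ψ z) * deriv ψ z = ψ z := by
  have := hpos z
  rw [deriv_of_sub_one_add_log_eq hpos hinv]
  field_simp

theorem contDiff_of_sub_one_add_log_eq : ContDiff ℝ ∞ ψ := by
  refine contDiff_infty.mpr fun n => ?_
  induction n with
  | zero => exact contDiff_zero.mpr (continuous_of_sub_one_add_log_eq hpos hinv)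
  | succ n ih =>
    rw [Nat.cast_succ]
    refine contDiff_succ_iff_deriv.mpr
      ⟨fun z => (hasDerivAt_of_sub_one_add_log_eq hpos hinv z).differentiableAt, by simp, ?_⟩
    rw [deriv_of_sub_one_add_log_eq hpos hinv]
    exact ih.div (contDiff_const.add ih) fun z => (by linarith [hpos z])

end DeformedExp

/-- The recursion for the derivatives of the deformed exponential `ψ`
(the inverse of `y ↦ y - 1 + log y`): for every `n ≥ 1`,
`(1+ψ)ψ⁽ⁿ⁾ = ψ⁽ⁿ⁻¹⁾ - (1/2)∑_{j=1}^{n-1} C(n,j) ψ⁽ʲ⁾ψ⁽ⁿ⁻ʲ⁾`. -/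
theorem psi_derivative_recursion (ψ : ℝ → ℝ)
    (hpos : ∀ z, 0 < ψ z)
    (hinv : ∀ z, ψ z - 1 + Real.log (ψ z) = z) :
    ∀ n : ℕ, 1 ≤ n → ∀ z : ℝ,
      (1 + ψ z) * iteratedDeriv n ψ z
        = iteratedDeriv (n - 1) ψ z
          - (1 / 2) * ∑ j ∈ Finset.Ico 1 n,
              (n.choose j : ℝ) * iteratedDeriv j ψ z * iteratedDeriv (n - j) ψ z := by
  intro n hn z
  obtain ⟨m, rfl⟩ := Nat.exists_eq_add_of_le' hn
  have hleibniz := iteratedDeriv_eq_of_one_add_mul_deriv (contDiff_of_sub_one_add_log_eq hpos hinv)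
    (one_add_mul_deriv_of_sub_one_add_log_eq hpos hinv) m z
  rw [sum_Ico_choose_succ_mul_eq_two_mul (fun j => iteratedDeriv j ψ z), Nat.add_sub_cancel]
  linear_combination -hleibniz
end

section
/- Let ψ be the inverse of y ↦ y - 1 + log y. For every n ≥ 2 there exists a polynomial Q of degree at most n-2 such that ψ^(n) = Q(ψ)·ψ'/(1+ψ)^{2(n-1)}. Consequently, for each n ≥ 2, the functions ψ^(n), ψ^(n)/ψ and ψ^(n)/ψ' are bounded on ℝ. -/
/-!
Differentiating `ψ - 1 + log ψ = z` gives `ψ' = ψ / (1 + ψ)`. With this rule, the derivative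
of `Q(ψ) ψ / (1 + ψ)^(k+1)` is `R(ψ) ψ / (1 + ψ)^(k+3)` with `R = X(1+X)Q' + (1 - kX)Q`, of
degree at most `deg Q + 1`; by induction `ψ⁽ᵏ⁺¹⁾ = P_k(ψ) ψ / (1 + ψ)^(2k+1)` with
`deg P_{k+1} ≤ k`.
Since `ψ > 0`, a polynomial of degree `≤ d` in `ψ` is `O((1 + ψ)^d)`, which bounds
`ψ⁽ⁿ⁾ / ψ' = Q(ψ) / (1 + ψ)^(2(n-1))`; the other two quotients are this one multiplied by
`ψ' = ψ / (1 + ψ) ≤ 1` and by `ψ' / ψ = 1 / (1 + ψ) ≤ 1`.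
-/

open Real Polynomial

namespace Polynomial

lemma natDegree_X_mul_derivative_le {R : Type*} [Semiring R] (p : R[X]) :
    (X * derivative p).natDegree ≤ p.natDegree := by
  rcases Nat.eq_zero_or_pos p.natDegree with hp | hp
  · simp [derivative_of_natDegree_zero hp]
  · have := natDegree_derivative_le p
    have := natDegree_X_le (R := R)
    have := natDegree_mul_le (p := (X : R[X])) (q := derivative p)
    omega

lemma abs_eval_div_one_add_pow_le {Q : ℝ[X]} {d : ℕ} (hQ : Q.natDegree ≤ d) {x : ℝ}
    (hx : 0 ≤ x) :
    |Q.eval x / (1 + x) ^ d| ≤ ∑ i ∈ Finset.range (Q.natDegree + 1), |Q.coeff i| := by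
  have hx1 : 0 < 1 + x := by linarith
  rw [abs_div, abs_of_pos (pow_pos hx1 d), div_le_iff₀ (pow_pos hx1 d), eval_eq_sum_range,
    Finset.sum_mul]
  refine (Finset.abs_sum_le_sum_abs _ _).trans (Finset.sum_le_sum fun i hi => ?_)
  rw [abs_mul, abs_pow, abs_of_nonneg hx]
  gcongr
  calc x ^ i ≤ (1 + x) ^ i := pow_le_pow_left₀ hx (by linarith) i
    _ ≤ (1 + x) ^ d := pow_le_pow_right₀ (by linarith) (by grind [Finset.mem_range_succ_iff])

end Polynomial

lemma abs_le_and_abs_div_le_of_abs_div_le {a y S : ℝ} (hy : 0 < y)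
    (h : |a / (y / (1 + y))| ≤ S) : |a| ≤ S ∧ |a / y| ≤ S := by
  have hy1 : 0 < 1 + y := by linarith
  have hmul : ∀ t, |t| ≤ 1 → |a / (y / (1 + y)) * t| ≤ S := fun t ht => by
    rw [abs_mul]
    exact (mul_le_of_le_one_right (abs_nonneg _) ht).trans h
  constructor
  · rw [← div_mul_cancel₀ a (div_pos hy hy1).ne']
    refine hmul _ ?_
    rw [abs_of_pos (div_pos hy hy1), div_le_one hy1]
    linarith
  · rw [show a / y = a / (y / (1 + y)) * (1 + y)⁻¹ by field_simp]
    refine hmul _ ?_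
    rw [abs_of_pos (inv_pos.2 hy1)]
    exact inv_le_one_of_one_le₀ (by linarith)

noncomputable def deformedLog (y : ℝ) : ℝ := y - 1 + Real.log y

lemma strictMonoOn_deformedLog : StrictMonoOn deformedLog (Set.Ioi 0) := by
  intro a ha b _ hab
  have := Real.log_lt_log ha hab
  unfold deformedLog
  linarith

lemma hasDerivAt_deformedLog {y : ℝ} (hy : y ≠ 0) :
    HasDerivAt deformedLog ((1 + y) / y) y := by
  rw [add_div, div_self hy, one_div, add_comm]
  exact ((hasDerivAt_id y).sub_const 1).add (Real.hasDerivAt_log hy)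

section LeftInverseDeformedLog

variable {ψ : ℝ → ℝ}

lemma range_eq_Ioi_of_leftInverse_deformedLog (hpos : ∀ z, 0 < ψ z)
    (hinv : Function.LeftInverse deformedLog ψ) : Set.range ψ = Set.Ioi 0 :=
  subset_antisymm (Set.range_subset_iff.2 hpos) fun _ hy =>
    ⟨_, strictMonoOn_deformedLog.injOn (hpos _) hy (hinv _)⟩

lemma strictMono_of_leftInverse_deformedLog (hpos : ∀ z, 0 < ψ z)
    (hinv : Function.LeftInverse deformedLog ψ) : StrictMono ψ := fun a b hab => by
  rwa [← strictMonoOn_deformedLog.lt_iff_lt (hpos a) (hpos b), hinv, hinv]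

lemma continuous_of_leftInverse_deformedLog (hpos : ∀ z, 0 < ψ z)
    (hinv : Function.LeftInverse deformedLog ψ) : Continuous ψ :=
  continuous_iff_continuousAt.2 fun z =>
    ((strictMono_of_leftInverse_deformedLog hpos hinv).strictMonoOn Set.univ
      ).continuousAt_of_image_mem_nhds Filter.univ_mem <| by
        rw [Set.image_univ, range_eq_Ioi_of_leftInverse_deformedLog hpos hinv]
        exact Ioi_mem_nhds (hpos z)

lemma hasDerivAt_of_leftInverse_deformedLog (hpos : ∀ z, 0 < ψ z)
    (hinv : Function.LeftInverse deformedLog ψ) (z : ℝ) :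
    HasDerivAt ψ (ψ z / (1 + ψ z)) z := by
  have h := HasDerivAt.of_local_left_inverse
    (continuous_of_leftInverse_deformedLog hpos hinv).continuousAt
    (hasDerivAt_deformedLog (hpos z).ne') (by have := hpos z; positivity)
    (Filter.Eventually.of_forall hinv)
  rwa [inv_div] at h

end LeftInverseDeformedLog

noncomputable def derivStep (k : ℕ) (Q : ℝ[X]) : ℝ[X] :=
  X * (1 + X) * derivative Q + (1 - C (k : ℝ) * X) * Q

lemma natDegree_derivStep_le {k d : ℕ} {Q : ℝ[X]} (hQ : Q.natDegree ≤ d) :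
    (derivStep k Q).natDegree ≤ d + 1 := by
  have h₁ : ((1 : ℝ[X]) + X).natDegree ≤ 1 := by compute_degree
  have h₂ : ((1 : ℝ[X]) - C (k : ℝ) * X).natDegree ≤ 1 := by compute_degree
  rw [derivStep, mul_comm X, mul_assoc]
  refine natDegree_add_le_of_degree_le ?_ ?_
  · exact natDegree_mul_le.trans (by have := natDegree_X_mul_derivative_le Q; omega)
  · exact natDegree_mul_le.trans (by omega)

lemma hasDerivAt_eval_mul_div_one_add_pow {f : ℝ → ℝ} {z : ℝ}
    (hf : HasDerivAt f (f z / (1 + f z)) z) (h1 : 1 + f z ≠ 0) (Q : ℝ[X]) (k : ℕ) :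
    HasDerivAt (fun z => Q.eval (f z) * f z / (1 + f z) ^ (k + 1))
      ((derivStep k Q).eval (f z) * f z / (1 + f z) ^ (k + 3)) z := by
  have h := (((Q.hasDerivAt (f z)).comp z hf).mul hf).div (hf.const_add 1 |>.pow (k + 1))
    (pow_ne_zero _ h1)
  refine h.congr_deriv ?_
  simp only [derivStep, Pi.pow_apply, Pi.mul_apply, Function.comp_apply, Nat.add_sub_cancel,
    eval_add, eval_mul, eval_sub, eval_one, eval_X, eval_C]
  push_cast
  field_simp
  ring

noncomputable def psiPoly : ℕ → ℝ[X]
  | 0 => 1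
  | k + 1 => derivStep (2 * k) (psiPoly k)

lemma natDegree_psiPoly_succ_le (k : ℕ) : (psiPoly (k + 1)).natDegree ≤ k := by
  induction k with
  | zero =>
    show (derivStep 0 1).natDegree ≤ 0
    simp [derivStep]
  | succ k ih => exact natDegree_derivStep_le ih

section DerivEqDivOneAdd

variable {f : ℝ → ℝ}

lemma iteratedDeriv_succ_eq_psiPoly (hf : ∀ z, HasDerivAt f (f z / (1 + f z)) z)
    (h1 : ∀ z, 1 + f z ≠ 0) (k : ℕ) :
    iteratedDeriv (k + 1) f = fun z => (psiPoly k).eval (f z) * f z / (1 + f z) ^ (2 * k + 1) := by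
  induction k with
  | zero =>
    ext z
    simp [psiPoly, (hf z).deriv]
  | succ k ih =>
    ext z
    rw [iteratedDeriv_succ, ih, (hasDerivAt_eval_mul_div_one_add_pow (hf z) (h1 z) _ _).deriv]
    rfl

lemma iteratedDeriv_add_two_eq_psiPoly_mul_deriv (hf : ∀ z, HasDerivAt f (f z / (1 + f z)) z)
    (h1 : ∀ z, 1 + f z ≠ 0) (k : ℕ) (z : ℝ) :
    iteratedDeriv (k + 2) f z
      = (psiPoly (k + 1)).eval (f z) * deriv f z / (1 + f z) ^ (2 * (k + 1)) := by
  rw [iteratedDeriv_succ_eq_psiPoly hf h1 (k + 1)]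
  dsimp only
  rw [(hf z).deriv, pow_succ]
  field_simp [h1 z]

end DerivEqDivOneAdd

/-- For the deformed exponential `ψ` (inverse of `y ↦ y - 1 + log y`) and every `n ≥ 2`
there is a polynomial `Q` of degree at most `n-2` with
`ψ⁽ⁿ⁾ = Q(ψ)·ψ'/(1+ψ)^{2(n-1)}`; consequently `ψ⁽ⁿ⁾`, `ψ⁽ⁿ⁾/ψ` and `ψ⁽ⁿ⁾/ψ'` are bounded. -/
theorem psi_higher_derivatives (ψ : ℝ → ℝ)
    (hpos : ∀ z, 0 < ψ z)
    (hinv : ∀ z, ψ z - 1 + Real.log (ψ z) = z) :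
    ∀ n : ℕ, 2 ≤ n →
      (∃ Q : Polynomial ℝ, Q.natDegree ≤ n - 2 ∧
        ∀ z : ℝ, iteratedDeriv n ψ z
          = Q.eval (ψ z) * deriv ψ z / (1 + ψ z) ^ (2 * (n - 1))) ∧
      (∃ C : ℝ, ∀ z : ℝ,
        |iteratedDeriv n ψ z| ≤ C ∧
        |iteratedDeriv n ψ z / ψ z| ≤ C ∧
        |iteratedDeriv n ψ z / deriv ψ z| ≤ C) := by
  intro n hn
  obtain ⟨k, rfl⟩ : ∃ k, n = k + 2 := ⟨n - 2, by omega⟩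
  have hψ' := hasDerivAt_of_leftInverse_deformedLog hpos hinv
  have h1 : ∀ z, 1 + ψ z ≠ 0 := fun z => by linarith [hpos z]
  have hformula := iteratedDeriv_add_two_eq_psiPoly_mul_deriv hψ' h1 k
  set S := ∑ i ∈ Finset.range ((psiPoly (k + 1)).natDegree + 1), |(psiPoly (k + 1)).coeff i|
  have hratio : ∀ z, |iteratedDeriv (k + 2) ψ z / deriv ψ z| ≤ S := fun z => by
    have hderiv : deriv ψ z ≠ 0 := by
      rw [(hψ' z).deriv]
      exact div_ne_zero (hpos z).ne' (h1 z)
    rw [hformula z, mul_div_right_comm, mul_div_cancel_right₀ _ hderiv]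
    exact abs_eval_div_one_add_pow_le ((natDegree_psiPoly_succ_le k).trans (by omega)) (hpos z).le
  refine ⟨⟨psiPoly (k + 1), natDegree_psiPoly_succ_le k, hformula⟩, S, fun z => ?_⟩
  have h := hratio z
  rw [(hψ' z).deriv] at h ⊢
  obtain ⟨hbound, hbound_div⟩ := abs_le_and_abs_div_le_of_abs_div_le (hpos z) h
  exact ⟨hbound, hbound_div, h⟩
end

section
/- For every t ∈ (1, 2) the equation (t-1)·tan(w) = w has a unique solution w in the open interval (0, π). -/
/-!
For `a ≠ 0` and `w ∈ (0, π)`, `a * tan w = w` is equivalent to `w * cos w / sin w = a` (also at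
`w = π / 2`, where Lean's `tan` is `0`). The function `w * cos w / sin w` is strictly decreasing on
`(0, π)`, as its derivative is `(sin w * cos w - w) / sin w ^ 2` and `sin w * cos w ≤ sin w < w`.
For `0 < a < 1` it is `0` at `π / 2` and `a * w / sin w > a` at `w = arccos a`, so the intermediate
value theorem gives a solution.
-/

open Real Set

namespace Real

lemma hasDerivAt_mul_cos_div_sin {x : ℝ} (hx : sin x ≠ 0) :
    HasDerivAt (fun w => w * cos w / sin w) ((sin x * cos x - x) / sin x ^ 2) x := by
  have h_num : HasDerivAt (fun w => w * cos w) (1 * cos x + x * -sin x) x :=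
    (hasDerivAt_id x).mul (hasDerivAt_cos x)
  refine (h_num.div (hasDerivAt_sin x) hx).congr_deriv ?_
  congr 1
  linear_combination -x * sin_sq_add_cos_sq x

lemma continuousOn_mul_cos_div_sin : ContinuousOn (fun w => w * cos w / sin w) (Ioo 0 π) :=
  (continuous_id.mul continuous_cos).continuousOn.div continuous_sin.continuousOn
    fun _ hx => (sin_pos_of_pos_of_lt_pi hx.1 hx.2).ne'

lemma strictAntiOn_mul_cos_div_sin : StrictAntiOn (fun w => w * cos w / sin w) (Ioo 0 π) := by
  refine strictAntiOn_of_deriv_neg (convex_Ioo 0 π) continuousOn_mul_cos_div_sin fun x hx => ?_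
  rw [interior_Ioo] at hx
  have hsin : 0 < sin x := sin_pos_of_pos_of_lt_pi hx.1 hx.2
  rw [(hasDerivAt_mul_cos_div_sin hsin.ne').deriv]
  have hsin_cos_lt : sin x * cos x < x :=
    calc sin x * cos x ≤ sin x := mul_le_of_le_one_right hsin.le (cos_le_one x)
      _ < x := sin_lt hx.1
  exact div_neg_of_neg_of_pos (by linarith) (by positivity)

lemma mul_tan_eq_self_iff {a w : ℝ} (ha : a ≠ 0) (hw : w ≠ 0) (hsin : sin w ≠ 0) :
    a * tan w = w ↔ w * cos w / sin w = a := by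
  rw [tan_eq_sin_div_cos]
  by_cases hcos : cos w = 0
  · simp [hcos, Ne.symm hw, Ne.symm ha]
  · rw [mul_div_assoc', div_eq_iff hcos, div_eq_iff hsin]
    constructor <;> intro h <;> linarith

lemma exists_mul_cos_div_sin_eq {a : ℝ} (ha : a ∈ Ioo 0 1) :
    ∃ w ∈ Ioo 0 π, w * cos w / sin w = a := by
  set w₁ := arccos a
  have hw₁_pos : 0 < w₁ := arccos_pos.mpr ha.2
  have hw₁_le : w₁ ≤ π / 2 := arccos_le_pi_div_two.mpr ha.1.le
  have hsub : Icc w₁ (π / 2) ⊆ Ioo 0 π := fun x hx =>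
    ⟨by linarith [hx.1], by linarith [hx.2, pi_pos]⟩
  have hsin₁ : 0 < sin w₁ := sin_pos_of_pos_of_lt_pi hw₁_pos (hsub ⟨le_rfl, hw₁_le⟩).2
  have h_at_w₁ : a ≤ w₁ * cos w₁ / sin w₁ := by
    rw [cos_arccos (by linarith [ha.1]) ha.2.le, le_div_iff₀ hsin₁]
    nlinarith [sin_lt hw₁_pos, ha.1]
  have h_at_pi_div_two : π / 2 * cos (π / 2) / sin (π / 2) = 0 := by simp
  obtain ⟨w, hw, hw_eq⟩ := intermediate_value_Icc' hw₁_le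
    (continuousOn_mul_cos_div_sin.mono hsub) ⟨h_at_pi_div_two ▸ ha.1.le, h_at_w₁⟩
  exact ⟨w, hsub hw, hw_eq⟩

theorem existsUnique_mul_tan_eq_self {a : ℝ} (ha : a ∈ Ioo 0 1) :
    ∃! w, w ∈ Ioo 0 π ∧ a * tan w = w := by
  have h_iff : ∀ w ∈ Ioo 0 π, a * tan w = w ↔ w * cos w / sin w = a := fun w hw =>
    mul_tan_eq_self_iff ha.1.ne' hw.1.ne' (sin_pos_of_pos_of_lt_pi hw.1 hw.2).ne'
  obtain ⟨w, hw, hw_eq⟩ := exists_mul_cos_div_sin_eq ha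
  refine ⟨w, ⟨hw, (h_iff w hw).mpr hw_eq⟩, fun v ⟨hv, hv_eq⟩ => ?_⟩
  exact strictAntiOn_mul_cos_div_sin.injOn hv hw (((h_iff v hv).mp hv_eq).trans hw_eq.symm)

end Real

/-- For every `t ∈ (1,2)` the equation `(t-1)·tan w = w` has a unique solution
`w` in the open interval `(0, π)`. -/
theorem tan_equation_unique_solution (t : ℝ) (ht : t ∈ Set.Ioo (1 : ℝ) 2) :
    ∃! w : ℝ, w ∈ Set.Ioo 0 Real.pi ∧ (t - 1) * Real.tan w = w :=
  existsUnique_mul_tan_eq_self ⟨by linarith [ht.1], by linarith [ht.2]⟩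
end

section
/- Let P, Q be finite measures mutually absolutely continuous with a probability measure μ, with densities p, q such that φ(P) := p - 1 + log p and φ(Q) := q - 1 + log q lie in L²(μ). Then D(P|Q) + D(Q|P) = ⟨(p−q), (log p − log q)⟩_{L²(μ)} ≤ (1/2)‖φ(P) − φ(Q)‖²_{L²(μ)}, where D(P|Q) = Q(ℝ^d) − P(ℝ^d) + ∫ p log(p/q) dμ is the extended KL divergence for finite measures. -/
open Real MeasureTheory

section

variable {X : Type*} [MeasurableSpace X] {μ : Measure X}

theorem integral_sub_mul_log_sub_eq_add {p q : X → ℝ}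
    (hpq : Integrable (fun x => p x * (log (p x) - log (q x))) μ)
    (hqp : Integrable (fun x => q x * (log (q x) - log (p x))) μ) :
    ∫ x, (p x - q x) * (log (p x) - log (q x)) ∂μ
      = (∫ x, p x * (log (p x) - log (q x)) ∂μ) + ∫ x, q x * (log (q x) - log (p x)) ∂μ := by
  rw [← integral_add hpq hqp]
  congr 1 with x
  ring

/-- Pointwise `a * b ≤ (a + b) ^ 2 / 2`; when `f * g` is not integrable its integral is `0`. -/
theorem integral_mul_le_half_integral_add_sq {f g : X → ℝ} (hfg : MemLp (f + g) 2 μ) :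
    ∫ x, f x * g x ∂μ ≤ 1 / 2 * ∫ x, (f x + g x) ^ 2 ∂μ := by
  by_cases hfg_int : Integrable (fun x => f x * g x) μ
  · rw [← integral_const_mul]
    refine integral_mono hfg_int (hfg.integrable_sq.const_mul _) fun x => ?_
    nlinarith [sq_nonneg (f x), sq_nonneg (g x)]
  · rw [integral_undef hfg_int]
    have : 0 ≤ ∫ x, (f x + g x) ^ 2 ∂μ := integral_nonneg fun x => sq_nonneg _
    positivity

end

theorem symmetrised_KL_bound_general {X : Type*} [MeasurableSpace X]
    (μ : Measure X)
    (p q : X → ℝ)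
    (hpL : MemLp (fun x => p x - 1 + Real.log (p x)) 2 μ)
    (hqL : MemLp (fun x => q x - 1 + Real.log (q x)) 2 μ)
    (hint : Integrable (fun x => p x * (Real.log (p x) - Real.log (q x))) μ)
    (hint' : Integrable (fun x => q x * (Real.log (q x) - Real.log (p x))) μ) :
    ((∫ x, q x ∂μ) - (∫ x, p x ∂μ) + ∫ x, p x * (Real.log (p x) - Real.log (q x)) ∂μ)
      + ((∫ x, p x ∂μ) - (∫ x, q x ∂μ) + ∫ x, q x * (Real.log (q x) - Real.log (p x)) ∂μ)
      = ∫ x, (p x - q x) * (Real.log (p x) - Real.log (q x)) ∂μ ∧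
    ∫ x, (p x - q x) * (Real.log (p x) - Real.log (q x)) ∂μ
      ≤ (1 / 2) * ∫ x, ((p x - 1 + Real.log (p x)) - (q x - 1 + Real.log (q x))) ^ 2 ∂μ := by
  have hchart : (fun x => p x - 1 + log (p x)) - (fun x => q x - 1 + log (q x))
      = (fun x => p x - q x) + fun x => log (p x) - log (q x) := by
    ext x; simp only [Pi.add_apply, Pi.sub_apply]; ring
  refine ⟨by rw [integral_sub_mul_log_sub_eq_add hint hint']; ring, ?_⟩
  convert integral_mul_le_half_integral_add_sq (hchart ▸ hpL.sub hqL) using 4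
  ring

/-- For finite measures `P, Q ≪≫ μ` with densities `p, q` such that the balanced charts
`φ(P) = p - 1 + log p` and `φ(Q) = q - 1 + log q` lie in `L²(μ)`, the symmetrised
extended KL divergence satisfies
`D(P|Q) + D(Q|P) = ⟨p − q, log p − log q⟩_{L²(μ)} ≤ (1/2)‖φ(P) − φ(Q)‖²_{L²(μ)}`,
where `D(P|Q) = Q(ℝ^d) − P(ℝ^d) + ∫ p log(p/q) dμ`. -/
theorem symmetrised_KL_bound {X : Type*} [MeasurableSpace X]
    (μ : Measure X) [IsProbabilityMeasure μ]
    (p q : X → ℝ) (hp : ∀ x, 0 < p x) (hq : ∀ x, 0 < q x)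
    (hpm : Measurable p) (hqm : Measurable q)
    (hpL : MemLp (fun x => p x - 1 + Real.log (p x)) 2 μ)
    (hqL : MemLp (fun x => q x - 1 + Real.log (q x)) 2 μ)
    (hint : Integrable (fun x => p x * (Real.log (p x) - Real.log (q x))) μ)
    (hint' : Integrable (fun x => q x * (Real.log (q x) - Real.log (p x))) μ) :
    ((∫ x, q x ∂μ) - (∫ x, p x ∂μ) + ∫ x, p x * (Real.log (p x) - Real.log (q x)) ∂μ)
      + ((∫ x, p x ∂μ) - (∫ x, q x ∂μ) + ∫ x, q x * (Real.log (q x) - Real.log (p x)) ∂μ)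
      = ∫ x, (p x - q x) * (Real.log (p x) - Real.log (q x)) ∂μ ∧
    ∫ x, (p x - q x) * (Real.log (p x) - Real.log (q x)) ∂μ
      ≤ (1 / 2) * ∫ x, ((p x - 1 + Real.log (p x)) - (q x - 1 + Real.log (q x))) ^ 2 ∂μ :=
  symmetrised_KL_bound_general μ p q hpL hqL hint hint'
end

section
/- Let λ ≥ 1 and define f : (0,∞) → ℝ by f(z) = (−log z)^λ for z ∈ (0,1) and f(z) = (z−1)^λ for z ≥ 1. Then |log z|^λ ≤ f(z) for all z > 0, and f is convex on (0,∞). -/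
open Real Set

/-!
On `(0, ∞)` the piecewise function is `g ^ λ` with `g z = max (-log z) (z - 1)`: below `1` the
logarithm is negative and above `1` it is nonnegative, which picks out the branch. Since
`log z ≤ z - 1`, we get `|log z| = max (log z) (-log z) ≤ g z`. The function `g` is a maximum of
two convex functions, hence convex and nonnegative, and `t ↦ t ^ λ` is convex and monotone on
`[0, ∞)` for `λ ≥ 1`, so the composite `g ^ λ` is convex.
-/

theorem ConvexOn.rpow {E : Type*} [AddCommMonoid E] [Module ℝ E] {s : Set E} {f : E → ℝ}
    {p : ℝ} (hf : ConvexOn ℝ s f) (hf₀ : ∀ x ∈ s, 0 ≤ f x) (hp : 1 ≤ p) :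
    ConvexOn ℝ s fun x => f x ^ p := by
  refine ⟨hf.1, fun x hx y hy a b ha hb hab => ?_⟩
  calc f (a • x + b • y) ^ p ≤ (a • f x + b • f y) ^ p :=
        rpow_le_rpow (hf₀ _ (hf.1 hx hy ha hb hab)) (hf.2 hx hy ha hb hab) (by linarith)
    _ ≤ a • f x ^ p + b • f y ^ p := (convexOn_rpow hp).2 (hf₀ x hx) (hf₀ y hy) ha hb hab

namespace Real

theorem convexOn_max_neg_log_sub_one : ConvexOn ℝ (Ioi 0) fun z => max (-log z) (z - 1) :=
  strictConcaveOn_log_Ioi.concaveOn.neg.sup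
    ((convexOn_id (convex_Ioi 0)).sub (concaveOn_const _ (convex_Ioi 0)))

theorem abs_log_le_max_neg_log_sub_one {z : ℝ} (hz : 0 < z) :
    |log z| ≤ max (-log z) (z - 1) := by
  rw [abs_eq_max_neg, max_comm]
  exact max_le_max le_rfl (log_le_sub_one_of_pos hz)

theorem ite_neg_log_sub_one_eq_max {z : ℝ} (hz : 0 < z) (f : ℝ → ℝ) :
    (if z < 1 then f (-log z) else f (z - 1)) = f (max (-log z) (z - 1)) := by
  split_ifs with h
  · rw [max_eq_left (by linarith [log_neg hz h])]
  · rw [max_eq_right (by linarith [log_nonneg (not_lt.mp h)])]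

end Real

/-- For `λ ≥ 1`, the function `f(z) = (−log z)^λ` on `(0,1)`, `f(z) = (z−1)^λ` on `[1,∞)`,
dominates `|log z|^λ` on `(0,∞)` and is convex on `(0,∞)`. -/
theorem log_dominating_convex_function (l : ℝ) (hl : 1 ≤ l) :
    (∀ z : ℝ, 0 < z →
      |Real.log z| ^ l ≤ (if z < 1 then (-Real.log z) ^ l else (z - 1) ^ l)) ∧
    ConvexOn ℝ (Set.Ioi (0 : ℝ))
      (fun z : ℝ => if z < 1 then (-Real.log z) ^ l else (z - 1) ^ l) := by
  have hf : EqOn (fun z : ℝ => if z < 1 then (-log z) ^ l else (z - 1) ^ l)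
      (fun z => max (-log z) (z - 1) ^ l) (Ioi 0) :=
    fun z hz => ite_neg_log_sub_one_eq_max hz (· ^ l)
  constructor
  · intro z hz
    exact (rpow_le_rpow (abs_nonneg _) (abs_log_le_max_neg_log_sub_one hz) (by linarith)).trans_eq
      (hf hz).symm
  · refine (convexOn_max_neg_log_sub_one.rpow (fun z hz => ?_) hl).congr hf.symm
    exact (abs_nonneg _).trans (abs_log_le_max_neg_log_sub_one hz)
end

section
/- Let ψ be the inverse of y ↦ y − 1 + log y, let μ be a probability measure, and let G₀ be a Banach space of measurable functions with ∫ a dμ = 0 for all a ∈ G₀, continuously embedded in L¹(μ). For each a ∈ G₀ the function z ↦ ∫ ψ(a + z) dμ is a strictly increasing continuous bijection from ℝ onto (0,∞); consequently there is a unique Z(a) ∈ ℝ with ∫ ψ(a + Z(a)) dμ = 1, so that p = ψ(a + Z(a)) is a probability density with respect to μ. -/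
/-! `ψ` is strictly increasing and `1`-Lipschitz, because its inverse `y ↦ y - 1 + log y` has
slope at least `1`; hence so is `z ↦ ∫ ψ (a + z) dμ`. From `0 < ψ z ≤ exp (z + 1)`, dominated
convergence sends the integral to `0` as `z → -∞`; from `ψ z ≥ z / 2 + 1` and `∫ a dμ = 0`, the
integral is at least `z / 2 + 1`, so it tends to `∞`. The intermediate value theorem does the rest. -/

open Real MeasureTheory Set Filter Topology
open scoped NNReal

section DeformedExp

variable {ψ : ℝ → ℝ}

theorem strictMono_of_sub_one_add_log_eq_s19 (hpos : ∀ z, 0 < ψ z)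
    (hinv : ∀ z, ψ z - 1 + log (ψ z) = z) : StrictMono ψ := by
  intro u v huv
  by_contra! h
  linarith [log_le_log (hpos v) h, hinv u, hinv v]

theorem lipschitzWith_one_of_sub_one_add_log_eq (hpos : ∀ z, 0 < ψ z)
    (hinv : ∀ z, ψ z - 1 + log (ψ z) = z) : LipschitzWith 1 ψ := by
  have hmono := (strictMono_of_sub_one_add_log_eq_s19 hpos hinv).monotone
  refine LipschitzWith.of_le_add_mul 1 fun u v => ?_
  rw [NNReal.coe_one, one_mul, dist_eq]
  rcases le_total u v with huv | hvu
  · linarith [hmono huv, abs_nonneg (u - v)]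
  · -- `log ∘ ψ` is monotone, so `ψ` grows no faster than `ψ - 1 + log ψ = id`
    linarith [log_le_log (hpos v) (hmono hvu), hinv u, hinv v, le_abs_self (u - v)]

theorem le_exp_add_one_of_sub_one_add_log_eq (hpos : ∀ z, 0 < ψ z)
    (hinv : ∀ z, ψ z - 1 + log (ψ z) = z) (z : ℝ) : ψ z ≤ exp (z + 1) := by
  rw [← exp_log (hpos z), exp_le_exp]
  linarith [hinv z, hpos z]

theorem add_two_le_two_mul_of_sub_one_add_log_eq (hpos : ∀ z, 0 < ψ z)
    (hinv : ∀ z, ψ z - 1 + log (ψ z) = z) (z : ℝ) : z + 2 ≤ 2 * ψ z := by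
  linarith [hinv z, log_le_sub_one_of_pos (hpos z)]

theorem tendsto_atBot_of_sub_one_add_log_eq (hpos : ∀ z, 0 < ψ z)
    (hinv : ∀ z, ψ z - 1 + log (ψ z) = z) : Tendsto ψ atBot (𝓝 0) := by
  have hexp : Tendsto (fun z => exp (z + 1)) atBot (𝓝 0) :=
    tendsto_exp_atBot.comp (tendsto_atBot_add_const_right _ 1 tendsto_id)
  exact tendsto_of_tendsto_of_tendsto_of_le_of_le tendsto_const_nhds hexp
    (fun z => (hpos z).le) (le_exp_add_one_of_sub_one_add_log_eq hpos hinv)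

end DeformedExp

section ShiftedIntegral

variable {X : Type*} [MeasurableSpace X] {μ : Measure X} {φ : ℝ → ℝ} {a : X → ℝ}

theorem integral_pos_of_forall_pos [NeZero μ] {f : X → ℝ} (hf : ∀ x, 0 < f x)
    (hfi : Integrable f μ) : 0 < ∫ x, f x ∂μ := by
  have hsupp : Function.support f = univ := eq_univ_of_forall fun x => (hf x).ne'
  rw [integral_pos_iff_support_of_nonneg (fun x => (hf x).le) hfi, hsupp,
    Measure.measure_univ_pos]
  exact NeZero.ne μ

theorem integrable_comp_add_const [IsFiniteMeasure μ] {K : ℝ≥0} (hφ : LipschitzWith K φ)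
    (ha : Integrable a μ) (z : ℝ) : Integrable (fun x => φ (a x + z)) μ := by
  refine ((integrable_const ‖φ z‖).add (ha.norm.const_mul K)).mono'
    (hφ.continuous.comp_aestronglyMeasurable (ha.1.add aestronglyMeasurable_const)) ?_
  filter_upwards with x
  have h := hφ.dist_le_mul (a x + z) z
  rw [dist_eq_norm, Real.dist_eq, add_sub_cancel_right, ← Real.norm_eq_abs] at h
  simp only [Pi.add_apply]
  linarith [norm_sub_norm_le (φ (a x + z)) (φ z)]

theorem lipschitzWith_integral_comp_add [IsProbabilityMeasure μ] {K : ℝ≥0}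
    (hφ : LipschitzWith K φ) (ha : Integrable a μ) :
    LipschitzWith K (fun z => ∫ x, φ (a x + z) ∂μ) := by
  refine LipschitzWith.of_dist_le_mul fun z w => ?_
  rw [dist_eq_norm, ← integral_sub (integrable_comp_add_const hφ ha z)
    (integrable_comp_add_const hφ ha w)]
  calc ‖∫ x, (φ (a x + z) - φ (a x + w)) ∂μ‖ ≤ K * dist z w * μ.real univ := by
        refine norm_integral_le_of_norm_le_const (Eventually.of_forall fun x => ?_)
        simpa [← dist_eq_norm, dist_add_left] using hφ.dist_le_mul (a x + z) (a x + w)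
    _ = K * dist z w := by rw [probReal_univ, mul_one]

theorem strictMono_integral_comp_add [IsFiniteMeasure μ] [NeZero μ] (hφ : StrictMono φ)
    (hint : ∀ z, Integrable (fun x => φ (a x + z)) μ) :
    StrictMono (fun z => ∫ x, φ (a x + z) ∂μ) := by
  intro z w hzw
  have hgap := integral_pos_of_forall_pos (μ := μ)
    (fun x => sub_pos.mpr (hφ (by linarith))) ((hint w).sub (hint z))
  rw [integral_sub (hint w) (hint z)] at hgap
  exact sub_pos.mp hgap

theorem tendsto_integral_comp_add_atBot [IsFiniteMeasure μ] (hφ : Monotone φ)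
    (hφ_nonneg : ∀ z, 0 ≤ φ z) (hφ_lim : Tendsto φ atBot (𝓝 0))
    (hint : ∀ z, Integrable (fun x => φ (a x + z)) μ) :
    Tendsto (fun z => ∫ x, φ (a x + z) ∂μ) atBot (𝓝 0) := by
  have hlim := tendsto_integral_filter_of_dominated_convergence (μ := μ) (l := atBot)
    (F := fun z x => φ (a x + z)) (fun x => φ (a x))
    (Eventually.of_forall fun z => (hint z).aestronglyMeasurable)
    ((eventually_le_atBot 0).mono fun z hz => Eventually.of_forall fun x => by
      rw [norm_of_nonneg (hφ_nonneg _)]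
      exact hφ (by linarith))
    (by simpa using hint 0)
    (Eventually.of_forall fun x => hφ_lim.comp (tendsto_atBot_add_const_left _ (a x) tendsto_id))
  simpa using hlim

theorem tendsto_integral_comp_add_atTop [IsProbabilityMeasure μ] {k m : ℝ} (hk : 0 < k)
    (hφ : ∀ z, k * z + m ≤ φ z) (ha : Integrable a μ) (ha0 : ∫ x, a x ∂μ = 0)
    (hint : ∀ z, Integrable (fun x => φ (a x + z)) μ) :
    Tendsto (fun z => ∫ x, φ (a x + z) ∂μ) atTop atTop := by
  have haffine : ∀ z, ∫ x, (k * (a x + z) + m) ∂μ = k * z + m := fun z => by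
    simp only [mul_add, add_assoc]
    rw [integral_add (ha.const_mul k) (integrable_const _), integral_const_mul, ha0]
    simp
  refine tendsto_atTop_mono (fun z => ?_) (tendsto_atTop_add_const_right _ m
    (tendsto_id.const_mul_atTop hk))
  exact (haffine z).symm.le.trans <| integral_mono (((ha.add (integrable_const z)).const_mul k).add (integrable_const m))
    (hint z) fun x => hφ _

end ShiftedIntegral

theorem bijOn_univ_Ioi_zero_of_tendsto {F : ℝ → ℝ} (hmono : StrictMono F) (hcont : Continuous F)
    (hpos : ∀ z, 0 < F z) (hbot : Tendsto F atBot (𝓝 0)) (htop : Tendsto F atTop atTop) :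
    BijOn F univ (Ioi 0) := by
  refine ⟨fun z _ => hpos z, hmono.injective.injOn, fun c hc => ?_⟩
  obtain ⟨z, hz⟩ := (hbot.eventually (eventually_lt_nhds hc)).exists
  obtain ⟨w, hw⟩ := (htop.eventually (eventually_ge_atTop c)).exists
  obtain ⟨y, hy⟩ := intermediate_value_univ z w hcont ⟨hz.le, hw⟩
  exact ⟨y, mem_univ y, hy⟩

/-- Normalisation for the deformed exponential model: if `ψ` is the inverse of
`y ↦ y − 1 + log y`, `μ` a probability measure, and `a` an integrable function with
`∫ a dμ = 0`, then `z ↦ ∫ ψ(a + z) dμ` is a strictly increasing continuous bijection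
from `ℝ` onto `(0,∞)`, and there is a unique `Z` with `∫ ψ(a + Z) dμ = 1`. -/
theorem deformed_exponential_normalisation {X : Type*} [MeasurableSpace X]
    (μ : Measure X) [IsProbabilityMeasure μ]
    (ψ : ℝ → ℝ) (hpos : ∀ z, 0 < ψ z)
    (hinv : ∀ z, ψ z - 1 + Real.log (ψ z) = z)
    (G₀ : Set (X → ℝ))
    (hG : ∀ a ∈ G₀, Integrable a μ ∧ ∫ x, a x ∂μ = 0) :
    ∀ a ∈ G₀,
      StrictMono (fun z : ℝ => ∫ x, ψ (a x + z) ∂μ) ∧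
      Continuous (fun z : ℝ => ∫ x, ψ (a x + z) ∂μ) ∧
      Set.BijOn (fun z : ℝ => ∫ x, ψ (a x + z) ∂μ) Set.univ (Set.Ioi 0) ∧
      ∃! Z : ℝ, ∫ x, ψ (a x + Z) ∂μ = 1 := by
  intro a ha
  obtain ⟨hai, ha0⟩ := hG a ha
  have hψmono := strictMono_of_sub_one_add_log_eq_s19 hpos hinv
  have hψlip := lipschitzWith_one_of_sub_one_add_log_eq hpos hinv
  have hint := integrable_comp_add_const hψlip hai
  have hmono := strictMono_integral_comp_add hψmono hint
  have hcont := (lipschitzWith_integral_comp_add hψlip hai).continuous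
  have hbij : BijOn (fun z => ∫ x, ψ (a x + z) ∂μ) univ (Ioi 0) :=
    bijOn_univ_Ioi_zero_of_tendsto hmono hcont
      (fun z => integral_pos_of_forall_pos (fun x => hpos _) (hint z))
      (tendsto_integral_comp_add_atBot hψmono.monotone (fun z => (hpos z).le)
        (tendsto_atBot_of_sub_one_add_log_eq hpos hinv) hint)
      (tendsto_integral_comp_add_atTop (m := 1) one_half_pos
        (fun z => by linarith [add_two_le_two_mul_of_sub_one_add_log_eq hpos hinv z]) hai ha0 hint)
  obtain ⟨Z, -, hZ⟩ := hbij.surjOn (mem_Ioi.mpr one_pos)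
  exact ⟨hmono, hcont, hbij, Z, hZ, fun Y hY => hmono.injective (hY.trans hZ.symm)⟩
end
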